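/- Under the same dynamics ẋᵢ = −(1 − xᵢ)xᵢ + ∑ⱼ cⱼᵢ(t)(1 − xⱼ)xⱼ with C(t) doubly stochastic and x(t₀) ∈ Δₙ, the function h(t) = maxᵢ xᵢ(t) is nonincreasing and the function l(t) = minᵢ xᵢ(t) is nondecreasing in t. -/

import Mathlib

/-!
Write `f y = (1 - y) y`. Since the columns of `C` sum to `1`, the velocity of coordinate `i` is
`∑ⱼ cⱼᵢ (f xⱼ - f xᵢ)`, and `f xⱼ - f xᵢ = (xᵢ - xⱼ)(xᵢ + xⱼ - 1)`. On the simplex `xᵢ + xⱼ ≤ 1`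
for `j ≠ i`, so a maximal coordinate has velocity `≤ 0` and a minimal one velocity `≥ 0`.
This tangency is only weak, so the trajectory is fenced in the box `[l - B, h + B]` instead,
where a coordinate meeting the boundary moves outwards at speed `O(B)` only; an exponentially
growing barrier `B` beats that, and `B → 0` at the end. The row sums of `C` being `1` keep the
total mass equal to `1`.
-/

open Filter Set Topology

theorem eventually_nhdsGT_lt_of_hasDerivAt {f g : ℝ → ℝ} {f' g' t : ℝ}
    (hf : HasDerivAt f f' t) (hg : HasDerivAt g g' t) (hle : f t ≤ g t)
    (hcontact : f t = g t → f' < g') : ∀ᶠ z in 𝓝[>] t, f z < g z := by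
  rcases hle.lt_or_eq with hlt | heq
  · exact (hf.continuousAt.eventually_lt hg.continuousAt hlt).filter_mono nhdsWithin_le_nhds
  · have hslope := (hf.sub hg).hasDerivWithinAt.limsup_slope_le' (s := Ioi t) (lt_irrefl t)
      (sub_neg.2 (hcontact heq))
    filter_upwards [hslope, self_mem_nhdsWithin] with z hz htz
    rw [slope_def_field, Pi.sub_apply, Pi.sub_apply, heq, sub_self, sub_zero] at hz
    exact sub_neg.1 (neg_of_div_neg_left hz (sub_pos.2 htz).le)

theorem forall_mem_Icc_of_hasDerivAt_of_contact {ι : Type*} [Finite ι]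
    {x v : ℝ → ι → ℝ} {L U L' U' : ℝ → ℝ} {a b : ℝ}
    (hx : ∀ t ∈ Icc a b, ∀ i, HasDerivAt (fun u => x u i) (v t i) t)
    (hL : ∀ t ∈ Icc a b, HasDerivAt L (L' t) t) (hU : ∀ t ∈ Icc a b, HasDerivAt U (U' t) t)
    (ha : ∀ i, x a i ∈ Icc (L a) (U a))
    (hcontact : ∀ t ∈ Ico a b, (∀ j, x t j ∈ Icc (L t) (U t)) → ∀ i,
      (x t i = L t → L' t < v t i) ∧ (x t i = U t → v t i < U' t)) :
    ∀ t ∈ Icc a b, ∀ i, x t i ∈ Icc (L t) (U t) := by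
  set S := {t | ∀ i, x t i ∈ Icc (L t) (U t)}
  have hclosed : IsClosed (S ∩ Icc a b) := by
    have hxc : ContinuousOn x (Icc a b) := continuousOn_pi.2 fun i t ht =>
      (hx t ht i).continuousAt.continuousWithinAt
    have hLc : ContinuousOn L (Icc a b) := fun t ht => (hL t ht).continuousAt.continuousWithinAt
    have hUc : ContinuousOn U (Icc a b) := fun t ht => (hU t ht).continuousAt.continuousWithinAt
    convert isClosed_Icc.isClosed_le (f := fun t => ((fun _ : ι => L t), x t))
      (g := fun t => (x t, fun _ : ι => U t)) ((continuousOn_pi.2 fun _ => hLc).prodMk hxc)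
      (hxc.prodMk (continuousOn_pi.2 fun _ => hUc)) using 1
    ext t
    simp only [S, mem_inter_iff, mem_ofPred_eq, mem_Icc, Prod.mk_le_mk, Pi.le_def, forall_and]
    tauto
  refine fun t ht => hclosed.Icc_subset_of_forall_mem_nhdsGT_of_Icc_subset ha
    (fun t ht hsub => ?_) ht
  have hS : ∀ j, x t j ∈ Icc (L t) (U t) := hsub ⟨ht.1, le_rfl⟩
  have ht' : t ∈ Icc a b := Ico_subset_Icc_self ht
  refine eventually_all.2 fun i => ?_
  filter_upwards [eventually_nhdsGT_lt_of_hasDerivAt (hL t ht') (hx t ht' i) (hS i).1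
      fun h => (hcontact t ht hS i).1 h.symm,
    eventually_nhdsGT_lt_of_hasDerivAt (hx t ht' i) (hU t ht') (hS i).2
      (hcontact t ht hS i).2] with z hLz hUz
  exact ⟨hLz.le, hUz.le⟩

section SelfAppraisal

variable {ι : Type*} [Fintype ι]

def selfAppraisalField (C : Matrix ι ι ℝ) (y : ι → ℝ) (i : ι) : ℝ :=
  -(1 - y i) * y i + ∑ j, C j i * (1 - y j) * y j

theorem sum_selfAppraisalField {C : Matrix ι ι ℝ} (hrow : ∀ j, ∑ i, C j i = 1) (y : ι → ℝ) :
    ∑ i, selfAppraisalField C y i = 0 := by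
  have hswap : ∑ i, ∑ j, C j i * (1 - y j) * y j = ∑ j, (1 - y j) * y j := by
    rw [Finset.sum_comm]
    refine Finset.sum_congr rfl fun j _ => ?_
    rw [← Finset.sum_mul, ← Finset.sum_mul, hrow j, one_mul]
  simp only [selfAppraisalField, Finset.sum_add_distrib, hswap, neg_mul, Finset.sum_neg_distrib,
    neg_add_cancel]

theorem selfAppraisalField_eq_sum {C : Matrix ι ι ℝ} {i : ι} (hcol : ∑ j, C j i = 1)
    (y : ι → ℝ) :
    selfAppraisalField C y i = ∑ j, C j i * ((1 - y j) * y j - (1 - y i) * y i) := by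
  have hterm : ∀ j, C j i * ((1 - y j) * y j - (1 - y i) * y i)
      = C j i * (1 - y j) * y j - C j i * ((1 - y i) * y i) := fun j => by ring
  simp only [selfAppraisalField, hterm, Finset.sum_sub_distrib, ← Finset.sum_mul, hcol]
  ring

theorem add_le_one_add_card_mul {y : ι → ℝ} {δ : ℝ} (hsum : ∑ k, y k = 1) (hδ : 0 ≤ δ)
    (hy : ∀ k, -δ ≤ y k) {i j : ι} (hij : i ≠ j) :
    y i + y j ≤ 1 + Fintype.card ι * δ := by
  classical
  have hpair : ∑ k ∈ {i, j}, (y k + δ) ≤ ∑ k, (y k + δ) :=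
    Finset.sum_le_sum_of_subset_of_nonneg (Finset.subset_univ _)
      fun k _ _ => neg_le_iff_add_nonneg.1 (hy k)
  rw [Finset.sum_pair hij, Finset.sum_add_distrib, hsum] at hpair
  simp only [Finset.sum_const, Finset.card_univ, nsmul_eq_mul] at hpair
  linarith

theorem selfAppraisalField_le_of_eq_upper {C : Matrix ι ι ℝ} {y : ι → ℝ} {l h δ : ℝ} {i : ι}
    (hC : ∀ j, 0 ≤ C j i) (hcol : ∑ j, C j i = 1) (hsum : ∑ k, y k = 1)
    (hl : 0 ≤ l) (hh : h ≤ 1) (hδ : 0 ≤ δ) (hδ1 : δ ≤ 1)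
    (hy : ∀ k, y k ∈ Icc (l - δ) (h + δ)) (hi : y i = h + δ) :
    selfAppraisalField C y i ≤ 3 * Fintype.card ι * δ := by
  have hterm : ∀ j, (1 - y j) * y j - (1 - y i) * y i ≤ 3 * Fintype.card ι * δ := by
    intro j
    have hnδ : 0 ≤ Fintype.card ι * δ := by positivity
    rcases eq_or_ne i j with rfl | hij
    · linarith
    have hsum2 := add_le_one_add_card_mul hsum hδ (fun k => by linarith [(hy k).1]) hij
    have hgap : 0 ≤ y i - y j := by linarith [(hy j).2]
    have hgap3 : y i - y j ≤ 3 := by linarith [(hy j).1]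
    nlinarith [mul_le_mul_of_nonneg_left hsum2 hgap, mul_le_mul_of_nonneg_right hgap3 hnδ]
  calc selfAppraisalField C y i
      = ∑ j, C j i * ((1 - y j) * y j - (1 - y i) * y i) := selfAppraisalField_eq_sum hcol y
    _ ≤ ∑ j, C j i * (3 * Fintype.card ι * δ) :=
      Finset.sum_le_sum fun j _ => mul_le_mul_of_nonneg_left (hterm j) (hC j)
    _ = 3 * Fintype.card ι * δ := by rw [← Finset.sum_mul, hcol, one_mul]

theorem le_selfAppraisalField_of_eq_lower {C : Matrix ι ι ℝ} {y : ι → ℝ} {l h δ : ℝ} {i : ι}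
    (hC : ∀ j, 0 ≤ C j i) (hcol : ∑ j, C j i = 1) (hsum : ∑ k, y k = 1)
    (hl : 0 ≤ l) (hh : h ≤ 1) (hδ : 0 ≤ δ) (hδ1 : δ ≤ 1)
    (hy : ∀ k, y k ∈ Icc (l - δ) (h + δ)) (hi : y i = l - δ) :
    -(3 * Fintype.card ι * δ) ≤ selfAppraisalField C y i := by
  have hterm : ∀ j, -(3 * Fintype.card ι * δ) ≤ (1 - y j) * y j - (1 - y i) * y i := by
    intro j
    have hnδ : 0 ≤ Fintype.card ι * δ := by positivity
    rcases eq_or_ne i j with rfl | hij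
    · linarith
    have hsum2 := add_le_one_add_card_mul hsum hδ (fun k => by linarith [(hy k).1]) hij
    have hgap : 0 ≤ y j - y i := by linarith [(hy j).1]
    have hgap3 : y j - y i ≤ 3 := by linarith [(hy j).2]
    nlinarith [mul_le_mul_of_nonneg_left hsum2 hgap, mul_le_mul_of_nonneg_right hgap3 hnδ]
  calc -(3 * Fintype.card ι * δ) = ∑ j, C j i * -(3 * Fintype.card ι * δ) := by
        rw [← Finset.sum_mul, hcol, one_mul]
    _ ≤ ∑ j, C j i * ((1 - y j) * y j - (1 - y i) * y i) :=
      Finset.sum_le_sum fun j _ => mul_le_mul_of_nonneg_left (hterm j) (hC j)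
    _ = selfAppraisalField C y i := (selfAppraisalField_eq_sum hcol y).symm

theorem sum_eq_of_hasDerivAt_selfAppraisalField {C : ℝ → Matrix ι ι ℝ} {x : ℝ → ι → ℝ} {t₀ : ℝ}
    (hrow : ∀ t, t₀ ≤ t → ∀ j, ∑ i, C t j i = 1)
    (hderiv : ∀ t, t₀ ≤ t → ∀ i,
      HasDerivAt (fun u => x u i) (selfAppraisalField (C t) (x t) i) t)
    {t : ℝ} (ht : t₀ ≤ t) : ∑ i, x t i = ∑ i, x t₀ i := by
  have hsum_deriv : ∀ u, t₀ ≤ u → HasDerivAt (fun v => ∑ i, x v i) 0 u := fun u hu => by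
    simpa only [sum_selfAppraisalField (hrow u hu)] using
      HasDerivAt.fun_sum (u := Finset.univ) fun i _ => hderiv u hu i
  exact constant_of_has_deriv_right_zero
    (fun u hu => (hsum_deriv u hu.1).continuousAt.continuousWithinAt)
    (fun u hu => (hsum_deriv u hu.1).hasDerivWithinAt) t ⟨ht, le_rfl⟩

theorem mem_Icc_of_hasDerivAt_selfAppraisalField {C : ℝ → Matrix ι ι ℝ} {x : ℝ → ι → ℝ}
    {s l h : ℝ} (hC : ∀ t, s ≤ t → ∀ i, (∀ j, 0 ≤ C t j i) ∧ ∑ j, C t j i = 1)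
    (hderiv : ∀ t, s ≤ t → ∀ i,
      HasDerivAt (fun u => x u i) (selfAppraisalField (C t) (x t) i) t)
    (hsum : ∀ t, s ≤ t → ∑ i, x t i = 1) (hl : 0 ≤ l) (hh : h ≤ 1)
    (hs : ∀ i, x s i ∈ Icc l h) {T : ℝ} (hsT : s ≤ T) : ∀ i, x T i ∈ Icc l h := by
  -- The rate `A` exceeds the constant `3 * card ι` of the contact estimates; `B T = ε`.
  have hfence : ∀ ε, 0 < ε → ε ≤ 1 → ∀ i, x T i ∈ Icc (l - ε) (h + ε) := by
    intro ε hε hε1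
    set A : ℝ := 3 * Fintype.card ι + 1
    set B : ℝ → ℝ := fun t => ε * Real.exp (A * (t - T))
    have hB : ∀ t, HasDerivAt B (A * B t) t := fun t =>
      ((((hasDerivAt_id t).sub_const T).const_mul A).exp.const_mul ε).congr_deriv
        (by simp only [B, id]; ring)
    have hBpos : ∀ t, 0 < B t := fun t => by positivity
    have hB1 : ∀ t ≤ T, B t ≤ 1 := fun t ht =>
      calc B t ≤ ε * 1 := by
            show ε * _ ≤ _
            gcongr
            exact Real.exp_le_one_iff.2 (mul_nonpos_of_nonneg_of_nonpos (by positivity)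
              (sub_nonpos.2 ht))
        _ ≤ 1 := by linarith
    have hbox := forall_mem_Icc_of_hasDerivAt_of_contact (x := x) (a := s) (b := T)
      (L := fun t => l - B t) (U := fun t => h + B t)
      (L' := fun t => -(A * B t)) (U' := fun t => A * B t)
      (fun t ht => hderiv t ht.1) (fun t _ => (hB t).const_sub l) (fun t _ => (hB t).const_add h)
      (fun i => ⟨by linarith [(hs i).1, hBpos s], by linarith [(hs i).2, hBpos s]⟩)
      (fun t ht hin i => by
        obtain ⟨hCnn, hcol⟩ := hC t ht.1 i
        have hA : 3 * Fintype.card ι * B t < A * B t := by linarith [hBpos t]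
        exact ⟨fun hi => by
            linarith [le_selfAppraisalField_of_eq_lower hCnn hcol (hsum t ht.1) hl hh
              (hBpos t).le (hB1 t ht.2.le) hin hi],
          fun hi => by
            linarith [selfAppraisalField_le_of_eq_upper hCnn hcol (hsum t ht.1) hl hh
              (hBpos t).le (hB1 t ht.2.le) hin hi]⟩)
      T ⟨hsT, le_rfl⟩
    simpa [B] using hbox
  intro i
  constructor
  · refine le_of_forall_pos_le_add fun ε hε => ?_
    linarith [(hfence (min ε 1) (lt_min hε one_pos) (min_le_right _ _) i).1, min_le_left ε 1]
  · refine le_of_forall_pos_le_add fun ε hε => ?_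
    linarith [(hfence (min ε 1) (lt_min hε one_pos) (min_le_right _ _) i).2, min_le_left ε 1]

end SelfAppraisal

/-- Under the self-appraisal dynamics with doubly stochastic C(t) and
x(t₀) ∈ Δₙ, the maximum h(t) = maxᵢ xᵢ(t) is nonincreasing and the minimum
l(t) = minᵢ xᵢ(t) is nondecreasing in t. -/
theorem max_nonincreasing_min_nondecreasing (n : ℕ) (hn : 0 < n) (t₀ : ℝ)
    (C : ℝ → Matrix (Fin n) (Fin n) ℝ)
    (hC : ∀ t, t₀ ≤ t →
      (∀ i j, 0 ≤ C t i j) ∧ (∀ i, ∑ j, C t i j = 1) ∧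
      (∀ j, ∑ i, C t i j = 1) ∧ (∀ i, C t i i = 0))
    (x : ℝ → Fin n → ℝ)
    (hdyn : ∀ t, t₀ ≤ t → ∀ i, HasDerivAt (fun s => x s i)
      (-(1 - x t i) * x t i + ∑ j, C t j i * (1 - x t j) * x t j) t)
    (hx0 : (∀ i, 0 ≤ x t₀ i) ∧ ∑ i, x t₀ i = 1) :
    ∀ s t : ℝ, t₀ ≤ s → s ≤ t →
      (⨆ i, x t i) ≤ (⨆ i, x s i) ∧ (⨅ i, x s i) ≤ (⨅ i, x t i) := by
  have : Nonempty (Fin n) := ⟨⟨0, hn⟩⟩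
  have hsum : ∀ t, t₀ ≤ t → ∑ i, x t i = 1 := fun t ht =>
    (sum_eq_of_hasDerivAt_selfAppraisalField (fun u hu => (hC u hu).2.1) hdyn ht).trans hx0.2
  have hbox : ∀ s, t₀ ≤ s → (∀ i, 0 ≤ x s i) → ∀ t, s ≤ t →
      ∀ i, x t i ∈ Icc (⨅ j, x s j) (⨆ j, x s j) := by
    intro s hs hnn t hst
    have hsup : ⨆ j, x s j ≤ 1 := Real.iSup_le (fun i => (hsum s hs) ▸
      Finset.single_le_sum (fun j _ => hnn j) (Finset.mem_univ i)) zero_le_one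
    exact mem_Icc_of_hasDerivAt_selfAppraisalField
      (fun u hu i => ⟨fun j => (hC u (hs.trans hu)).1 j i, (hC u (hs.trans hu)).2.2.1 i⟩)
      (fun u hu => hdyn u (hs.trans hu)) (fun u hu => hsum u (hs.trans hu)) (le_ciInf hnn) hsup
      (fun i => ⟨ciInf_le (Finite.bddBelow_range _) i, le_ciSup (Finite.bddAbove_range _) i⟩) hst
  intro s t hs hst
  have hnn : ∀ i, 0 ≤ x s i := fun i =>
    (le_ciInf hx0.1).trans (hbox t₀ le_rfl hx0.1 s hs i).1
  exact ⟨ciSup_le fun i => (hbox s hs hnn t hst i).2, le_ciInf fun i => (hbox s hs hnn t hst i).1⟩
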